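/- arXiv:2402.07131 — 2 statements merged into one kernel-verified Lean document; each statement's English description precedes it below -/
import Mathlib

section
/- Let L : ℝ^d → ℝ be convex, twice continuously differentiable with L₂-Lipschitz Hessian, let θ* = argmin L, suppose ∇²L(θ*) ⪰ λI with λ > 0, and let w ∈ ℝ^d satisfy ‖w‖ < λ²/(6L₂). Then θ_w = argmin_θ {L(θ) + ⟨w, θ⟩} satisfies ‖θ_w − θ*‖ ≤ 2‖w‖/λ. -/
/-!
Write `h = θw - θstar`, `r = ‖h‖` and `ψ t = DL(θstar + t • h) h`. Convexity makes `ψ`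
nondecreasing, and the first-order conditions give `ψ 0 = 0` and
`ψ 1 = -⟪w, h⟫ ≤ ‖w‖ r`. The Hessian bound at `θstar` together with the Lipschitz estimate gives
`ψ' t ≥ lam r² - L₂ t r³`, so `lam t r² - L₂ t² r³ / 2 ≤ ψ t ≤ ‖w‖ r` on `[0, 1]`. Evaluating at
`t = min 1 (lam / (L₂ r))` forces `r ≤ 2 ‖w‖ / lam`.
-/

open Set

section LineRestriction

variable {E : Type*} [NormedAddCommGroup E] [NormedSpace ℝ E] {f : E → ℝ}

theorem hasDerivAt_add_smul (x v : E) (t : ℝ) : HasDerivAt (fun s : ℝ => x + s • v) v t := by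
  simpa using ((hasDerivAt_id t).smul_const v).const_add x

theorem hasDerivAt_fderiv_add_smul_apply {x v : E} {t : ℝ}
    (hf : DifferentiableAt ℝ (fderiv ℝ f) (x + t • v)) :
    HasDerivAt (fun s : ℝ => fderiv ℝ f (x + s • v) v)
      (fderiv ℝ (fderiv ℝ f) (x + t • v) v v) t := by
  have hgrad : HasDerivAt (fun s : ℝ => fderiv ℝ f (x + s • v))
      (fderiv ℝ (fderiv ℝ f) (x + t • v) v) t :=
    hf.hasFDerivAt.comp_hasDerivAt t (hasDerivAt_add_smul x v t)
  simpa using hgrad.clm_apply (hasDerivAt_const t v)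

theorem ConvexOn.monotone_fderiv_add_smul_apply (hconv : ConvexOn ℝ univ f)
    (hf : Differentiable ℝ f) (x v : E) :
    Monotone fun s : ℝ => fderiv ℝ f (x + s • v) v := by
  have hderiv : ∀ s : ℝ,
      HasDerivAt (fun s : ℝ => f (x + s • v)) (fderiv ℝ f (x + s • v) v) s := fun s =>
    (hf _).hasFDerivAt.comp_hasDerivAt s (hasDerivAt_add_smul x v s)
  have hconv_line : ConvexOn ℝ univ fun s : ℝ => f (x + s • v) := by
    have hcomp : (fun s : ℝ => f (x + s • v)) = f ∘ AffineMap.lineMap x (x + v) := by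
      ext s
      simp [AffineMap.lineMap_apply, add_comm]
    rw [hcomp]
    simpa using hconv.comp_affineMap (AffineMap.lineMap x (x + v))
  intro a b hab
  simpa only [(hderiv a).deriv, (hderiv b).deriv] using
    hconv_line.monotoneOn_deriv (fun s _ => (hderiv s).differentiableAt)
      (mem_univ a) (mem_univ b) hab

theorem abs_apply_apply_sub_le (A B : E →L[ℝ] E →L[ℝ] ℝ) (v : E) :
    |A v v - B v v| ≤ ‖A - B‖ * ‖v‖ ^ 2 := by
  simpa [sq, mul_assoc] using (A - B).le_opNorm₂ v v

theorem mul_sub_le_fderiv_add_smul_apply {K lam : ℝ} {x v : E}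
    (hf : Differentiable ℝ (fderiv ℝ f))
    (hlip : ∀ u, ‖fderiv ℝ (fderiv ℝ f) u - fderiv ℝ (fderiv ℝ f) x‖ ≤ K * ‖u - x‖)
    (hcrit : fderiv ℝ f x = 0) (hpos : lam * ‖v‖ ^ 2 ≤ fderiv ℝ (fderiv ℝ f) x v v)
    {t : ℝ} (ht : 0 ≤ t) :
    lam * t * ‖v‖ ^ 2 - K * t ^ 2 * ‖v‖ ^ 3 / 2 ≤ fderiv ℝ f (x + t • v) v := by
  have hhess : ∀ s, 0 ≤ s →
      lam * ‖v‖ ^ 2 - K * s * ‖v‖ ^ 3 ≤ fderiv ℝ (fderiv ℝ f) (x + s • v) v v := by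
    intro s hs
    have hdist : ‖fderiv ℝ (fderiv ℝ f) (x + s • v) - fderiv ℝ (fderiv ℝ f) x‖ ≤ K * (s * ‖v‖) := by
      simpa [norm_smul, abs_of_nonneg hs] using hlip (x + s • v)
    have hclose := abs_apply_apply_sub_le (fderiv ℝ (fderiv ℝ f) (x + s • v))
      (fderiv ℝ (fderiv ℝ f) x) v
    have hdist_sq := mul_le_mul_of_nonneg_right hdist (sq_nonneg ‖v‖)
    nlinarith [(abs_le.mp hclose).1]
  have hpoly : ∀ s : ℝ, HasDerivAt (fun s => lam * s * ‖v‖ ^ 2 - K * s ^ 2 * ‖v‖ ^ 3 / 2)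
      (lam * ‖v‖ ^ 2 - K * s * ‖v‖ ^ 3) s := fun s => by
    refine ((((hasDerivAt_id' s).const_mul lam).mul_const (‖v‖ ^ 2)).sub
      ((((hasDerivAt_pow 2 s).const_mul K).mul_const (‖v‖ ^ 3)).div_const 2)).congr_deriv ?_
    ring
  have hgrad := fun s => hasDerivAt_fderiv_add_smul_apply (x := x) (v := v) (hf (x + s • v))
  refine image_le_of_deriv_right_le_deriv_boundary
    (fun s _ => (hpoly s).continuousAt.continuousWithinAt)
    (fun s _ => (hpoly s).hasDerivWithinAt) (by simp [hcrit])
    (fun s _ => (hgrad s).continuousAt.continuousWithinAt)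
    (fun s _ => (hgrad s).hasDerivWithinAt) (fun s hs => hhess s hs.1) ⟨ht, le_rfl⟩

end LineRestriction

theorem IsMinOn.fderiv_apply_eq_neg_inner {F : Type*} [NormedAddCommGroup F]
    [InnerProductSpace ℝ F] {f : F → ℝ} {w x : F}
    (hmin : IsMinOn (fun u => f u + inner ℝ w u) univ x) (hf : DifferentiableAt ℝ f x) (v : F) :
    fderiv ℝ f x v = -inner ℝ w v := by
  have hcrit := (hmin.isLocalMin Filter.univ_mem).fderiv_eq_zero
  have hderiv : HasFDerivAt (fun u => f u + inner ℝ w u) (fderiv ℝ f x + innerSL ℝ w) x :=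
    hf.hasFDerivAt.add (innerSL ℝ w).hasFDerivAt
  rw [hderiv.fderiv] at hcrit
  have hcrit_v := congrArg (fun A : F →L[ℝ] ℝ => A v) hcrit
  simp only [add_apply, innerSL_apply_apply, zero_apply] at hcrit_v
  linarith

theorem le_two_mul_div_of_forall_cubic_le {lam K W r : ℝ} (hlam : 0 < lam)
    (hW : W < lam ^ 2 / (6 * K)) (hW₀ : 0 ≤ W)
    (h : ∀ t ∈ Icc (0 : ℝ) 1, lam * t * r ^ 2 - K * t ^ 2 * r ^ 3 / 2 ≤ W * r) :
    r ≤ 2 * W / lam := by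
  by_contra! hcon
  have hr : 0 < r := (by positivity : 0 ≤ 2 * W / lam).trans_lt hcon
  have hWr : 2 * W < r * lam := (div_lt_iff₀ hlam).mp hcon
  rcases le_or_gt (K * r) lam with hKr | hKr
  · have h1 := h 1 ⟨zero_le_one, le_rfl⟩
    nlinarith [mul_pos hr hr]
  · have hK : 0 < K := by nlinarith
    -- `t = lam / (K r)` maximizes the left-hand side, where it equals `lam ^ 2 r / (2 K)`.
    have ht := h (lam / (K * r)) ⟨by positivity, (div_le_one (by positivity)).mpr hKr.le⟩
    have hval : lam * (lam / (K * r)) * r ^ 2 - K * (lam / (K * r)) ^ 2 * r ^ 3 / 2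
        = lam ^ 2 / (2 * K) * r := by
      field_simp
      ring
    have hW_lt : W < lam ^ 2 / (2 * K) := hW.trans_le (by gcongr; linarith)
    nlinarith

theorem tilted_minimizer_perturbation_general {d : ℕ}
    (L : EuclideanSpace ℝ (Fin d) → ℝ) (L₂ lam : ℝ) (hlam : 0 < lam)
    (hconv : ConvexOn ℝ Set.univ L) (hsmooth : ContDiff ℝ 2 L)
    (hlip : ∀ u v, ‖fderiv ℝ (fderiv ℝ L) u - fderiv ℝ (fderiv ℝ L) v‖ ≤ L₂ * ‖u - v‖)
    (θstar : EuclideanSpace ℝ (Fin d)) (hmin : IsMinOn L Set.univ θstar)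
    (hpos : ∀ h : EuclideanSpace ℝ (Fin d), lam * ‖h‖ ^ 2 ≤ fderiv ℝ (fderiv ℝ L) θstar h h)
    (w : EuclideanSpace ℝ (Fin d)) (hw : ‖w‖ < lam ^ 2 / (6 * L₂))
    (θw : EuclideanSpace ℝ (Fin d))
    (hminw : IsMinOn (fun u => L u + (inner ℝ w u : ℝ)) Set.univ θw) :
    ‖θw - θstar‖ ≤ 2 * ‖w‖ / lam := by
  have hdL : Differentiable ℝ L := hsmooth.differentiable (by norm_num)
  have hd2L : Differentiable ℝ (fderiv ℝ L) :=
    (hsmooth.fderiv_right (m := 1) le_rfl).differentiable one_ne_zero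
  have hcrit : fderiv ℝ L θstar = 0 := (hmin.isLocalMin Filter.univ_mem).fderiv_eq_zero
  refine le_two_mul_div_of_forall_cubic_le hlam hw (norm_nonneg w) fun t ht => ?_
  calc lam * t * ‖θw - θstar‖ ^ 2 - L₂ * t ^ 2 * ‖θw - θstar‖ ^ 3 / 2
      ≤ fderiv ℝ L (θstar + t • (θw - θstar)) (θw - θstar) :=
        mul_sub_le_fderiv_add_smul_apply hd2L (fun u => hlip u θstar) hcrit (hpos _) ht.1
    _ ≤ fderiv ℝ L (θstar + (1 : ℝ) • (θw - θstar)) (θw - θstar) :=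
        hconv.monotone_fderiv_add_smul_apply hdL θstar (θw - θstar) ht.2
    _ = -inner ℝ w (θw - θstar) := by
        simpa using hminw.fderiv_apply_eq_neg_inner (hdL θw) (θw - θstar)
    _ ≤ ‖w‖ * ‖θw - θstar‖ := (neg_le_abs _).trans (abs_real_inner_le_norm w _)

/-- Perturbation of convex minimizers: if `L : ℝ^d → ℝ` is convex and `C²` with
`L₂`-Lipschitz Hessian, `θ*` minimizes `L`, `∇²L(θ*) ⪰ λ I` with `λ > 0`, and
`‖w‖ < λ²/(6 L₂)`, then any minimizer `θ_w` of `L(·) + ⟨w, ·⟩` satisfies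
`‖θ_w − θ*‖ ≤ 2‖w‖/λ`. -/
theorem tilted_minimizer_perturbation {d : ℕ}
    (L : EuclideanSpace ℝ (Fin d) → ℝ) (L₂ lam : ℝ) (hlam : 0 < lam) (hL₂ : 0 < L₂)
    (hconv : ConvexOn ℝ Set.univ L) (hsmooth : ContDiff ℝ 2 L)
    (hlip : ∀ u v, ‖fderiv ℝ (fderiv ℝ L) u - fderiv ℝ (fderiv ℝ L) v‖ ≤ L₂ * ‖u - v‖)
    (θstar : EuclideanSpace ℝ (Fin d)) (hmin : IsMinOn L Set.univ θstar)
    (hpos : ∀ h : EuclideanSpace ℝ (Fin d), lam * ‖h‖ ^ 2 ≤ fderiv ℝ (fderiv ℝ L) θstar h h)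
    (w : EuclideanSpace ℝ (Fin d)) (hw : ‖w‖ < lam ^ 2 / (6 * L₂))
    (θw : EuclideanSpace ℝ (Fin d))
    (hminw : IsMinOn (fun u => L u + (inner ℝ w u : ℝ)) Set.univ θw) :
    ‖θw - θstar‖ ≤ 2 * ‖w‖ / lam :=
  tilted_minimizer_perturbation_general L L₂ lam hlam hconv hsmooth hlip θstar hmin hpos w hw θw
    hminw
end

section
/- Let A₁,…,A_n be d×d Hermitian matrices with Σᵢ Aᵢ = 0 and ‖Aᵢ − A_j‖_op ≤ b for all i,j, π a uniform random permutation, X = Σ_{i=1}^m A_{π(i)}, and X' obtained by swapping two uniformly random indices in π. Then the conditional variance satisfies Δ_X = ((n−1)/4)·E[(X − X')² | π] ⪯ (m(n−m)/(2n))·b²·I_d. -/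
/-!
Swapping positions `j` and `k` of `π` changes `X` only if exactly one of them is among the first
`m`: with `w` the indicator of the first `m` positions, `X(π) - X(π ∘ (j k)) =
(w j - w k) • (A (π j) - A (π k))`. Each `(A (π j) - A (π k))²` is `⪯ b² I` because its operator
norm is at most `b`, and `∑ j k, (w j - w k)² = 2 m (n - m)`, so the sum of the squares is
`⪯ 2 m (n - m) b² I`; the prefactor `(n - 1)/4 · (n (n - 1))⁻¹` equals `(4 n)⁻¹`.
-/

open Finset ComplexOrder

/-- The subsampled sum `X(σ) = Σ_{i=1}^m A_{σ(i)}`. -/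
noncomputable def subsampleSum {n d : ℕ} (m : ℕ) (A : Fin n → Matrix (Fin d) (Fin d) ℂ)
    (σ : Equiv.Perm (Fin n)) : Matrix (Fin d) (Fin d) ℂ :=
  ∑ i : Fin n, if (i : ℕ) < m then A (σ i) else 0

theorem Fintype.sum_smul_sub_sum_smul_comp_swap {ι R M : Type*} [Fintype ι] [DecidableEq ι]
    [Ring R] [AddCommGroup M] [Module R M] (w : ι → R) (v : ι → M) (j k : ι) :
    ∑ i, w i • v i - ∑ i, w i • v (Equiv.swap j k i) = (w j - w k) • (v j - v k) := by
  rcases eq_or_ne j k with rfl | hjk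
  · simp
  rw [← Equiv.sum_comp (Equiv.swap j k) (fun i => w i • v (Equiv.swap j k i))]
  simp only [Equiv.swap_apply_self, ← sum_sub_distrib, ← sub_smul]
  rw [Fintype.sum_eq_add j k hjk fun i hi => by simp [Equiv.swap_apply_of_ne_of_ne hi.1 hi.2]]
  simp only [Equiv.swap_apply_left, Equiv.swap_apply_right]
  rw [smul_sub, ← neg_sub (w j), neg_smul, ← sub_eq_add_neg]

theorem Fintype.sum_sum_sq_sub {ι R : Type*} [Fintype ι] [CommRing R] (w : ι → R) :
    ∑ j, ∑ k, (w j - w k) ^ 2 = 2 * (Fintype.card ι * ∑ j, w j ^ 2 - (∑ j, w j) ^ 2) := by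
  simp only [sub_sq, sum_add_distrib, sum_sub_distrib, sum_const, card_univ, nsmul_eq_mul,
    ← mul_sum, ← sum_mul]
  ring

def subsampleWeight (m : ℕ) {n : ℕ} (i : Fin n) : ℝ := if (i : ℕ) < m then 1 else 0

theorem subsampleSum_eq_sum_smul {n d : ℕ} (m : ℕ) (A : Fin n → Matrix (Fin d) (Fin d) ℂ)
    (σ : Equiv.Perm (Fin n)) : subsampleSum m A σ = ∑ i, subsampleWeight m i • A (σ i) := by
  simp only [subsampleSum, subsampleWeight, ite_smul, one_smul, zero_smul]

theorem sum_subsampleWeight {n m : ℕ} (hm : m ≤ n) : ∑ i : Fin n, subsampleWeight m i = m := by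
  simp [subsampleWeight, Fin.card_filter_val_lt, hm]

theorem sum_sum_sq_subsampleWeight_sub {n m : ℕ} (hm : m ≤ n) :
    ∑ j : Fin n, ∑ k : Fin n, (subsampleWeight m j - subsampleWeight m k) ^ 2
      = 2 * m * (n - m) := by
  have hsq : ∀ i : Fin n, subsampleWeight m i ^ 2 = subsampleWeight m i := fun i => by
    unfold subsampleWeight; split_ifs <;> norm_num
  rw [Fintype.sum_sum_sq_sub, Fintype.card_fin]
  simp only [hsq, sum_subsampleWeight hm]
  ring

theorem subsampleSum_sub_subsampleSum_mul_swap {n d : ℕ} (m : ℕ)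
    (A : Fin n → Matrix (Fin d) (Fin d) ℂ) (π : Equiv.Perm (Fin n)) (j k : Fin n) :
    subsampleSum m A π - subsampleSum m A (π * Equiv.swap j k)
      = (subsampleWeight m j - subsampleWeight m k) • (A (π j) - A (π k)) := by
  simpa only [subsampleSum_eq_sum_smul, Equiv.Perm.coe_mul, Function.comp_apply] using
    Fintype.sum_smul_sub_sum_smul_comp_swap (subsampleWeight m) (fun i => A (π i)) j k

open scoped Matrix.Norms.L2Operator MatrixOrder in
theorem Matrix.IsHermitian.posSemidef_sq_smul_one_sub_sq {ι : Type*} [Fintype ι] [DecidableEq ι]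
    {M : Matrix ι ι ℂ} (hM : M.IsHermitian) {b : ℝ}
    (hb : ‖Matrix.toEuclideanCLM (𝕜 := ℂ) M‖ ≤ b) :
    (b ^ 2 • (1 : Matrix ι ι ℂ) - M ^ 2).PosSemidef := by
  have hsq : M ^ 2 = star M * M := by rw [sq, Matrix.star_eq_conjTranspose, hM.eq]
  rw [← Matrix.le_iff, ← Algebra.algebraMap_eq_smul_one, hsq]
  calc star M * M ≤ algebraMap ℝ _ (‖M‖ ^ 2) := CStarAlgebra.star_mul_le_algebraMap_norm_sq
    _ ≤ algebraMap ℝ _ (b ^ 2) :=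
      algebraMap_mono _ (pow_le_pow_left₀ (norm_nonneg _) hb 2)

theorem sum_sum_sq_subsampleSum_sub_mul_swap {n d : ℕ} (m : ℕ)
    (A : Fin n → Matrix (Fin d) (Fin d) ℂ) (π : Equiv.Perm (Fin n)) :
    ∑ j : Fin n, ∑ k : Fin n,
        (if j ≠ k then (subsampleSum m A π - subsampleSum m A (π * Equiv.swap j k)) ^ 2 else 0)
      = ∑ j, ∑ k, (subsampleWeight m j - subsampleWeight m k) ^ 2 • (A (π j) - A (π k)) ^ 2 := by
  refine sum_congr rfl fun j _ => sum_congr rfl fun k _ => ?_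
  rcases eq_or_ne j k with rfl | hjk
  · simp
  rw [if_pos hjk, subsampleSum_sub_subsampleSum_mul_swap, smul_pow]

theorem posSemidef_smul_one_sub_sum_sum_sq {n d m : ℕ} (hm : m ≤ n)
    (A : Fin n → Matrix (Fin d) (Fin d) ℂ) (hherm : ∀ i, (A i).IsHermitian) (b : ℝ)
    (hb : ∀ i j, ‖Matrix.toEuclideanCLM (𝕜 := ℂ) (A i - A j)‖ ≤ b) (π : Equiv.Perm (Fin n)) :
    Matrix.PosSemidef ((2 * m * (n - m) * b ^ 2 : ℝ) • (1 : Matrix (Fin d) (Fin d) ℂ) -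
      ∑ j, ∑ k, (subsampleWeight m j - subsampleWeight m k) ^ 2 • (A (π j) - A (π k)) ^ 2) := by
  have hsplit : (2 * m * (n - m) * b ^ 2 : ℝ) • (1 : Matrix (Fin d) (Fin d) ℂ) -
      ∑ j, ∑ k, (subsampleWeight m j - subsampleWeight m k) ^ 2 • (A (π j) - A (π k)) ^ 2
      = ∑ j, ∑ k, (subsampleWeight m j - subsampleWeight m k) ^ 2 •
          (b ^ 2 • (1 : Matrix (Fin d) (Fin d) ℂ) - (A (π j) - A (π k)) ^ 2) := by
    simp only [smul_sub, sum_sub_distrib, smul_smul, ← sum_smul, ← sum_mul,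
      sum_sum_sq_subsampleWeight_sub hm]
  rw [hsplit]
  exact Matrix.posSemidef_sum _ fun j _ => Matrix.posSemidef_sum _ fun k _ =>
    (((hherm _).sub (hherm _)).posSemidef_sq_smul_one_sub_sq (hb _ _)).smul (sq_nonneg _)

theorem subsample_conditional_variance_bound_general {n d m : ℕ} (hn : 2 ≤ n) (hm : m ≤ n)
    (A : Fin n → Matrix (Fin d) (Fin d) ℂ) (hherm : ∀ i, (A i).IsHermitian)
    (b : ℝ)
    (hb : ∀ i j, ‖Matrix.toEuclideanCLM (𝕜 := ℂ) (A i - A j)‖ ≤ b)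
    (π : Equiv.Perm (Fin n)) :
    (((((m : ℝ) * ((n : ℝ) - m) / (2 * n)) * b ^ 2 : ℝ) : ℂ) •
          (1 : Matrix (Fin d) (Fin d) ℂ)
        - (((n : ℂ) - 1) / 4) •
            (((n : ℂ) * ((n : ℂ) - 1))⁻¹ •
              ∑ J : Fin n, ∑ K : Fin n,
                if J ≠ K then
                  (subsampleSum m A π - subsampleSum m A (π * Equiv.swap J K)) ^ 2
                else 0)).PosSemidef := by
  have hn0 : (n : ℝ) ≠ 0 := by exact_mod_cast (by omega : n ≠ 0)
  have hn1 : (n : ℂ) - 1 ≠ 0 := sub_ne_zero.mpr (by exact_mod_cast (by omega : n ≠ 1))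
  have hcoeff : ((n : ℂ) - 1) / 4 * ((n : ℂ) * ((n : ℂ) - 1))⁻¹ = (((4 * n)⁻¹ : ℝ) : ℂ) := by
    push_cast
    field_simp
  have hconst :
      (m : ℝ) * (n - m) / (2 * n) * b ^ 2 = (4 * (n : ℝ))⁻¹ * (2 * m * (n - m) * b ^ 2) := by
    field_simp
    ring
  rw [sum_sum_sq_subsampleSum_sub_mul_swap, smul_smul, hcoeff, Complex.coe_smul,
    Complex.coe_smul, hconst, ← smul_smul, ← smul_sub]
  exact (posSemidef_smul_one_sub_sum_sum_sq hm A hherm b hb π).smul (by positivity)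

/-- Conditional variance bound for the subsampling Stein pair: with `A₁, …, A_n`
Hermitian, `Σᵢ Aᵢ = 0`, `‖Aᵢ − A_j‖_op ≤ b`, `X = Σ_{i=1}^m A_{π(i)}` and `X'` obtained by
a uniformly random transposition of `π`,
`Δ_X = ((n−1)/4)·E[(X − X')² | π] ⪯ (m(n−m)/(2n))·b²·I_d`. -/
theorem subsample_conditional_variance_bound {n d m : ℕ} (hn : 2 ≤ n) (hm : m ≤ n)
    (A : Fin n → Matrix (Fin d) (Fin d) ℂ) (hherm : ∀ i, (A i).IsHermitian)
    (hsum : ∑ i, A i = 0) (b : ℝ)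
    (hb : ∀ i j, ‖Matrix.toEuclideanCLM (𝕜 := ℂ) (A i - A j)‖ ≤ b)
    (π : Equiv.Perm (Fin n)) :
    (((((m : ℝ) * ((n : ℝ) - m) / (2 * n)) * b ^ 2 : ℝ) : ℂ) •
          (1 : Matrix (Fin d) (Fin d) ℂ)
        - (((n : ℂ) - 1) / 4) •
            (((n : ℂ) * ((n : ℂ) - 1))⁻¹ •
              ∑ J : Fin n, ∑ K : Fin n,
                if J ≠ K then
                  (subsampleSum m A π - subsampleSum m A (π * Equiv.swap J K)) ^ 2
                else 0)).PosSemidef :=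
  subsample_conditional_variance_bound_general hn hm A hherm b hb π
end
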